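/- arXiv:1405.6516 — 6 statements merged into one kernel-verified Lean document; each statement's English description precedes it below -/
import Mathlib

section
/- Let q ∈ (0,2], let w ∈ ℂ with |w| ≤ 1, and let c, a ∈ ℂ. Then |w|²|c|² + (q/2)|(1 − |w|²)c − w a|² ≤ |c|² + (q/2)|a|². (This is the statement that multiplying an analytic function f with f(0)=c, f′(0)=a by the Blaschke factor b(z) = (z − w)/(1 − w̄ z) does not increase |f(0)|² + (q/2)|f′(0)|², since (bf)(0) = −w c and (bf)′(0) = (1−|w|²)c − w a up to unimodular factors.) -/
/-!
With `r = |w|` and `s = 1 - r²`, the triangle inequality and the Cauchy–Schwarz inequality give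
`|s c - w a|² ≤ (s|c| + r|a|)² ≤ (s + r²)(s|c|² + |a|²)`, i.e. `|s c - w a|² ≤ s|c|² + |a|²` because `s + r² = 1`.
Multiplying by `q/2 ≤ 1` and adding `r²|c|²` then yields the claim.
-/

theorem sq_mul_add_mul_le (s r x y : ℝ) (hs : 0 ≤ s) :
    (s * x + r * y) ^ 2 ≤ (s + r ^ 2) * (s * x ^ 2 + y ^ 2) := by
  have identity : (s + r ^ 2) * (s * x ^ 2 + y ^ 2) - (s * x + r * y) ^ 2 = s * (y - r * x) ^ 2 := by
    ring
  nlinarith [mul_nonneg hs (sq_nonneg (y - r * x))]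

theorem Complex.norm_one_sub_sq_ofReal_norm {w : ℂ} (hw : ‖w‖ ≤ 1) :
    ‖1 - (‖w‖ : ℂ) ^ 2‖ = 1 - ‖w‖ ^ 2 := by
  rw [← Complex.ofReal_pow, ← Complex.ofReal_one, ← Complex.ofReal_sub, Complex.norm_real,
    Real.norm_of_nonneg]
  nlinarith [norm_nonneg w]

theorem Complex.norm_blaschke_derivative_sq_le {w : ℂ} (hw : ‖w‖ ≤ 1) (c a : ℂ) :
    ‖(1 - (‖w‖ : ℂ) ^ 2) * c - w * a‖ ^ 2 ≤ (1 - ‖w‖ ^ 2) * ‖c‖ ^ 2 + ‖a‖ ^ 2 := by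
  have hs : 0 ≤ 1 - ‖w‖ ^ 2 := by nlinarith [norm_nonneg w]
  have triangle : ‖(1 - (‖w‖ : ℂ) ^ 2) * c - w * a‖ ≤ (1 - ‖w‖ ^ 2) * ‖c‖ + ‖w‖ * ‖a‖ := by
    calc ‖(1 - (‖w‖ : ℂ) ^ 2) * c - w * a‖
        ≤ ‖(1 - (‖w‖ : ℂ) ^ 2) * c‖ + ‖w * a‖ := norm_sub_le _ _
      _ = (1 - ‖w‖ ^ 2) * ‖c‖ + ‖w‖ * ‖a‖ := by
        rw [norm_mul, norm_mul, Complex.norm_one_sub_sq_ofReal_norm hw]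
  calc ‖(1 - (‖w‖ : ℂ) ^ 2) * c - w * a‖ ^ 2
      ≤ ((1 - ‖w‖ ^ 2) * ‖c‖ + ‖w‖ * ‖a‖) ^ 2 := by gcongr
    _ ≤ (1 - ‖w‖ ^ 2 + ‖w‖ ^ 2) * ((1 - ‖w‖ ^ 2) * ‖c‖ ^ 2 + ‖a‖ ^ 2) :=
        sq_mul_add_mul_le _ _ _ _ hs
    _ = (1 - ‖w‖ ^ 2) * ‖c‖ ^ 2 + ‖a‖ ^ 2 := by ring

/-- **Blaschke factor contraction step.** For `0 < q ≤ 2`, `|w| ≤ 1` and `c, a ∈ ℂ`,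
`|w|²|c|² + (q/2)|(1-|w|²)c - wa|² ≤ |c|² + (q/2)|a|²`. -/
theorem blaschke_contraction (q : ℝ) (hq0 : 0 < q) (hq2 : q ≤ 2)
    (w c a : ℂ) (hw : ‖w‖ ≤ 1) :
    (‖w‖) ^ 2 * (‖c‖) ^ 2 +
      (q / 2) * (‖((1 - (‖w‖ : ℂ) ^ 2) * c) - w * a‖) ^ 2
      ≤ (‖c‖) ^ 2 + (q / 2) * (‖a‖) ^ 2 := by
  have hs : 0 ≤ (1 - ‖w‖ ^ 2) * ‖c‖ ^ 2 := mul_nonneg (by nlinarith [norm_nonneg w]) (sq_nonneg _)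
  calc ‖w‖ ^ 2 * ‖c‖ ^ 2 + q / 2 * ‖(1 - (‖w‖ : ℂ) ^ 2) * c - w * a‖ ^ 2
      ≤ ‖w‖ ^ 2 * ‖c‖ ^ 2 + q / 2 * ((1 - ‖w‖ ^ 2) * ‖c‖ ^ 2 + ‖a‖ ^ 2) := by
        gcongr
        exact Complex.norm_blaschke_derivative_sq_le hw c a
    _ ≤ ‖c‖ ^ 2 + q / 2 * ‖a‖ ^ 2 := by nlinarith
end

section
/- Let a : ℕ → ℂ be a multiplicative arithmetic function satisfying condition (B). Then ∑_{p prime} |a(p)|⁴ / p² < ∞ (i.e., the function p ↦ |a(p)|⁴/p² is summable over the primes). -/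
/-!
Taking `r = 0` in condition (B) bounds `∏_{p ≤ x} (1 + |a(p)|²/p)` by
`C₀ ∑_{n ≤ x} μ(n)²|a(n)|²/n`. Choosing `K` with `|a(p)| ≤ p^K`, multiplicativity gives
`|a(n)| ≤ n^K` for squarefree `n`, so the sum is at most `x^(2K+1)`. As `|a(p)|²/p ≤ C²` is bounded,
`t ≤ O(1) · log (1 + t)` turns the product bound into `∑_{p ≤ x} |a(p)|²/p = O(log x)`. Finally
`|a(p)|⁴/p² ≤ C² p^(2θ-1) · |a(p)|²/p` with `2θ - 1 < 0`, and on each dyadic block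
`[2^k, 2^(k+1))` this is `O((k+1) 2^((2θ-1)k))`, a convergent series.
-/

open Finset Real

theorem le_mul_log_one_add {t D : ℝ} (ht : 0 ≤ t) (htD : t ≤ D) :
    t ≤ (D + 2) / 2 * log (1 + t) := by
  have h := le_log_one_add_of_nonneg ht
  rw [div_le_iff₀ (by linarith)] at h
  nlinarith [log_nonneg (by linarith : (1 : ℝ) ≤ 1 + t)]

theorem sum_le_mul_log_prod_one_add {ι : Type*} (s : Finset ι) {t : ι → ℝ} {D : ℝ}
    (ht : ∀ i ∈ s, 0 ≤ t i) (htD : ∀ i ∈ s, t i ≤ D) :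
    ∑ i ∈ s, t i ≤ (D + 2) / 2 * log (∏ i ∈ s, (1 + t i)) := by
  rw [log_prod fun i hi => by linarith [ht i hi], mul_sum]
  exact sum_le_sum fun i hi => le_mul_log_one_add (ht i hi) (htD i hi)

theorem exists_mul_rpow_le_pow {C θ : ℝ} (hθ : θ ≤ 1) :
    ∃ K : ℕ, ∀ x : ℝ, 2 ≤ x → C * x ^ θ ≤ x ^ K := by
  obtain ⟨N, hN⟩ := pow_unbounded_of_one_lt C one_lt_two
  refine ⟨N + 1, fun x hx => ?_⟩
  calc C * x ^ θ ≤ 2 ^ N * x ^ (1 : ℝ) := by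
        gcongr
        linarith
    _ ≤ x ^ (N + 1) := by
        rw [rpow_one, pow_succ]
        gcongr

theorem sq_div_le_mul_rpow {x y C θ : ℝ} (hx : 0 < x) (hy : 0 ≤ y) (h : y ≤ C * x ^ θ) :
    y ^ 2 / x ≤ C ^ 2 * x ^ (2 * θ - 1) := by
  rw [rpow_sub hx, rpow_one, mul_comm 2 θ, rpow_mul hx.le, ← mul_div_assoc, rpow_two, ← mul_pow]
  gcongr

theorem summable_of_sum_Ico_two_pow_le {f g : ℕ → ℝ} (hf : ∀ n, 0 ≤ f n) (hg : Summable g)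
    (h : ∀ k, ∑ n ∈ Ico (2 ^ k) (2 ^ (k + 1)), f n ≤ g k) : Summable f := by
  have hg0 : ∀ k, 0 ≤ g k := fun k => (sum_nonneg fun n _ => hf n).trans (h k)
  have hblocks : ∀ N, ∑ n ∈ range (2 ^ N), f n
      = f 0 + ∑ k ∈ range N, ∑ n ∈ Ico (2 ^ k) (2 ^ (k + 1)), f n := by
    intro N
    induction N with
    | zero => simp
    | succ N ih =>
      rw [sum_range_succ, ← add_assoc, ← ih, range_eq_Ico, range_eq_Ico,
        sum_Ico_consecutive _ (Nat.zero_le _) (Nat.pow_le_pow_right two_pos N.le_succ)]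
  refine summable_of_sum_range_le hf (c := f 0 + ∑' k, g k) fun N => ?_
  calc ∑ n ∈ range N, f n ≤ ∑ n ∈ range (2 ^ N), f n :=
        sum_le_sum_of_subset_of_nonneg (range_subset_range.mpr Nat.lt_two_pow_self.le)
          fun n _ _ => hf n
    _ = f 0 + ∑ k ∈ range N, ∑ n ∈ Ico (2 ^ k) (2 ^ (k + 1)), f n := hblocks N
    _ ≤ f 0 + ∑' k, g k := by
        gcongr
        exact (sum_le_sum fun k _ => h k).trans (hg.sum_le_tsum _ fun k _ => hg0 k)

theorem summable_mul_rpow_of_sum_le_log {t : ℕ → ℝ} (ht : ∀ n, 0 ≤ t n) {s A B : ℝ}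
    (hs : s < 0) (h : ∀ m : ℕ, 2 ≤ m → ∑ n ∈ Icc 1 m, t n ≤ A + B * log m) :
    Summable fun n => t n * (n : ℝ) ^ s := by
  set ρ : ℝ := 2 ^ s
  have hρ0 : 0 ≤ ρ := by positivity
  have hρ1 : ρ < 1 := rpow_lt_one_of_one_lt_of_neg one_lt_two hs
  refine summable_of_sum_Ico_two_pow_le (g := fun k => (A + B * log 2 * (k + 1)) * ρ ^ k)
    (fun n => mul_nonneg (ht n) (by positivity)) ?_ fun k => ?_
  · have hgeom := summable_geometric_of_lt_one hρ0 hρ1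
    have hk := summable_pow_mul_geometric_of_norm_lt_one (R := ℝ) 1
      (by rwa [norm_of_nonneg hρ0])
    refine ((hgeom.mul_left (A + B * log 2)).add (hk.mul_left (B * log 2))).congr fun k => ?_
    simp only [pow_one]
    ring
  have hdecay : ∀ n ∈ Ico (2 ^ k) (2 ^ (k + 1)), ((n : ℕ) : ℝ) ^ s ≤ ρ ^ k := by
    intro n hn
    rw [rpow_pow_comm zero_le_two]
    exact rpow_le_rpow_of_nonpos (by positivity) (by exact_mod_cast (mem_Ico.mp hn).1)
      hs.le
  have hsub : Ico (2 ^ k) (2 ^ (k + 1)) ⊆ Icc (1 : ℕ) (2 ^ (k + 1)) := fun n hn =>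
    mem_Icc.mpr ⟨Nat.one_le_two_pow.trans (mem_Ico.mp hn).1, (mem_Ico.mp hn).2.le⟩
  calc ∑ n ∈ Ico (2 ^ k) (2 ^ (k + 1)), t n * (n : ℝ) ^ s
      ≤ ∑ n ∈ Ico (2 ^ k) (2 ^ (k + 1)), t n * ρ ^ k :=
        sum_le_sum fun n hn => mul_le_mul_of_nonneg_left (hdecay n hn) (ht n)
    _ ≤ (∑ n ∈ Icc 1 (2 ^ (k + 1)), t n) * ρ ^ k := by
        rw [← sum_mul]
        exact mul_le_mul_of_nonneg_right
          (sum_le_sum_of_subset_of_nonneg hsub fun n _ _ => ht n) (by positivity)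
    _ ≤ (A + B * log 2 * (k + 1)) * ρ ^ k := by
        gcongr
        refine (h _ (Nat.le_self_pow k.succ_ne_zero 2)).trans_eq ?_
        push_cast
        rw [log_pow]
        push_cast
        ring

theorem summable_sq_of_le_rpow_of_sum_le_log {t : ℕ → ℝ} (ht : ∀ n, 0 ≤ t n) {c s A B : ℝ}
    (hs : s < 0) (hdecay : ∀ n, t n ≤ c * (n : ℝ) ^ s)
    (hlog : ∀ m : ℕ, 2 ≤ m → ∑ n ∈ Icc 1 m, t n ≤ A + B * log m) :
    Summable fun n => t n ^ 2 := by
  refine ((summable_mul_rpow_of_sum_le_log ht hs hlog).mul_left c).of_nonneg_of_le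
    (fun n => sq_nonneg (t n)) fun n => ?_
  rw [sq, mul_left_comm]
  exact mul_le_mul_of_nonneg_left (hdecay n) (ht n)

theorem Nat.eq_prod_primeFactors_of_squarefree {M : Type*} [CommMonoid M] {f : ℕ → M}
    (h_one : f 1 = 1) (h_mul : ∀ m n : ℕ, m.Coprime n → f (m * n) = f m * f n)
    {n : ℕ} (hn : Squarefree n) : f n = ∏ p ∈ n.primeFactors, f p := by
  rw [Nat.multiplicative_factorization f h_mul h_one hn.ne_zero, Finsupp.prod,
    Nat.support_factorization]
  refine prod_congr rfl fun p hp => ?_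
  rw [Nat.factorization_eq_one_of_squarefree hn (Nat.prime_of_mem_primeFactors hp)
    (Nat.dvd_of_mem_primeFactors hp), pow_one]

theorem norm_le_pow_of_squarefree {R : Type*} [NormedCommRing R] [NormOneClass R] {f : ℕ → R}
    (h_one : f 1 = 1) (h_mul : ∀ m n : ℕ, m.Coprime n → f (m * n) = f m * f n) {K : ℕ}
    (hK : ∀ p : ℕ, p.Prime → ‖f p‖ ≤ (p : ℝ) ^ K) {n : ℕ} (hn : Squarefree n) :
    ‖f n‖ ≤ (n : ℝ) ^ K := by
  calc ‖f n‖ = ‖∏ p ∈ n.primeFactors, f p‖ := by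
        rw [Nat.eq_prod_primeFactors_of_squarefree h_one h_mul hn]
    _ ≤ ∏ p ∈ n.primeFactors, ‖f p‖ := norm_prod_le _ _
    _ ≤ ∏ p ∈ n.primeFactors, (p : ℝ) ^ K :=
        prod_le_prod (fun _ _ => norm_nonneg _)
          fun p hp => hK p (Nat.prime_of_mem_primeFactors hp)
    _ = (n : ℝ) ^ K := by
        rw [prod_pow, ← Nat.cast_prod, Nat.prod_primeFactors_of_squarefree hn]

theorem sum_moebius_sq_mul_norm_sq_div_le {R : Type*} [NormedCommRing R] [NormOneClass R]
    {f : ℕ → R} (h_one : f 1 = 1) (h_mul : ∀ m n : ℕ, m.Coprime n → f (m * n) = f m * f n)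
    {K : ℕ} (hK : ∀ p : ℕ, p.Prime → ‖f p‖ ≤ (p : ℝ) ^ K) (m : ℕ) :
    ∑ n ∈ Icc 1 m, (ArithmeticFunction.moebius n : ℝ) ^ 2 * ‖f n‖ ^ 2 / n
      ≤ (m : ℝ) ^ (2 * K + 1) := by
  have hterm : ∀ n ∈ Icc 1 m,
      (ArithmeticFunction.moebius n : ℝ) ^ 2 * ‖f n‖ ^ 2 / n ≤ (m : ℝ) ^ (2 * K) := by
    intro n hn
    obtain ⟨hn1, hnm⟩ := mem_Icc.mp hn
    have hn1' : (1 : ℝ) ≤ n := by exact_mod_cast hn1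
    by_cases hsq : Squarefree n
    · have hμ : (ArithmeticFunction.moebius n : ℝ) ^ 2 = 1 := by
        exact_mod_cast ArithmeticFunction.moebius_sq_eq_one_of_squarefree hsq
      calc (ArithmeticFunction.moebius n : ℝ) ^ 2 * ‖f n‖ ^ 2 / n ≤ ‖f n‖ ^ 2 := by
            rw [hμ, one_mul]
            exact div_le_self (by positivity) hn1'
        _ ≤ ((n : ℝ) ^ K) ^ 2 := by
            gcongr
            exact norm_le_pow_of_squarefree h_one h_mul hK hsq
        _ ≤ (m : ℝ) ^ (2 * K) := by
            rw [← pow_mul, mul_comm]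
            gcongr
    · simp [ArithmeticFunction.moebius_eq_zero_of_not_squarefree hsq]
  calc _ ≤ ∑ _n ∈ Icc 1 m, (m : ℝ) ^ (2 * K) := sum_le_sum hterm
    _ = (m : ℝ) ^ (2 * K + 1) := by
        rw [sum_const, Nat.card_Icc, nsmul_eq_mul, pow_succ]
        push_cast
        ring

theorem sum_prime_norm_sq_div_le_log {R : Type*} [NormedCommRing R] [NormOneClass R]
    {f : ℕ → R} (h_one : f 1 = 1) (h_mul : ∀ m n : ℕ, m.Coprime n → f (m * n) = f m * f n)
    {K : ℕ} (hK : ∀ p : ℕ, p.Prime → ‖f p‖ ≤ (p : ℝ) ^ K) {D C₀ : ℝ}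
    (hD : ∀ p : ℕ, p.Prime → ‖f p‖ ^ 2 / p ≤ D) (hC₀ : 0 < C₀) {m : ℕ} (hm : m ≠ 0)
    (hprod : ∏ p ∈ (Icc 1 m).filter Nat.Prime, (1 + ‖f p‖ ^ 2 / p)
      ≤ C₀ * ∑ n ∈ Icc 1 m, (ArithmeticFunction.moebius n : ℝ) ^ 2 * ‖f n‖ ^ 2 / n) :
    ∑ p ∈ (Icc 1 m).filter Nat.Prime, ‖f p‖ ^ 2 / p
      ≤ (D + 2) / 2 * (log C₀ + (2 * K + 1) * log m) := by
  have hD0 : 0 ≤ D := (div_nonneg (sq_nonneg _) zero_le_two).trans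
    (by exact_mod_cast hD 2 Nat.prime_two)
  calc ∑ p ∈ (Icc 1 m).filter Nat.Prime, ‖f p‖ ^ 2 / p
      ≤ (D + 2) / 2 * log (∏ p ∈ (Icc 1 m).filter Nat.Prime, (1 + ‖f p‖ ^ 2 / p)) :=
        sum_le_mul_log_prod_one_add _ (fun _ _ => by positivity)
          fun p hp => hD p (mem_filter.mp hp).2
    _ ≤ (D + 2) / 2 * log (C₀ * (m : ℝ) ^ (2 * K + 1)) := by
        gcongr
        exact hprod.trans (mul_le_mul_of_nonneg_left
          (sum_moebius_sq_mul_norm_sq_div_le h_one h_mul hK m) hC₀.le)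
    _ = (D + 2) / 2 * (log C₀ + (2 * K + 1) * log m) := by
        rw [log_mul hC₀.ne' (pow_ne_zero _ (Nat.cast_ne_zero.mpr hm)), log_pow]
        push_cast
        ring

/-- **Condition (B) implies `∑_p |a(p)|⁴/p² < ∞`.** -/
theorem summable_fourth_power_of_condB (a : ℕ → ℂ)
    (hmul : a 1 = 1 ∧ ∀ m n : ℕ, Nat.Coprime m n → a (m * n) = a m * a n)
    (hB : ∃ C : ℝ, 0 < C ∧ ∃ θ : ℝ, θ < 1 / 2 ∧
      (∀ p : ℕ, p.Prime → ‖a p‖ ≤ C * (p : ℝ) ^ θ) ∧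
      ∀ r : ℝ, ∃ Cr : ℝ, 0 < Cr ∧ ∀ x : ℝ, 2 ≤ x →
        ∏ p ∈ (Finset.Icc 1 ⌊x⌋₊).filter Nat.Prime,
          (1 + (2 : ℝ) ^ r * ‖a p‖ ^ 2 / (p : ℝ))
        ≤ Cr * ∑ n ∈ Finset.Icc 1 ⌊x⌋₊,
          ((ArithmeticFunction.moebius n : ℝ)) ^ 2 * ‖a n‖ ^ 2 *
            ((n.divisors.card : ℝ)) ^ r / (n : ℝ)) :
    Summable (fun p : Nat.Primes => ‖a p‖ ^ 4 / ((p : ℕ) : ℝ) ^ 2) := by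
  obtain ⟨h_one, h_mul⟩ := hmul
  obtain ⟨C, -, θ, hθ, hbound, hcond⟩ := hB
  obtain ⟨C₀, hC₀, hprod⟩ := hcond 0
  obtain ⟨K, hK⟩ := exists_mul_rpow_le_pow (C := C) (θ := θ) (by linarith)
  have hdecay (p : ℕ) (hp : p.Prime) : ‖a p‖ ^ 2 / p ≤ C ^ 2 * (p : ℝ) ^ (2 * θ - 1) :=
    sq_div_le_mul_rpow (by exact_mod_cast hp.pos) (norm_nonneg _) (hbound p hp)
  have hD (p : ℕ) (hp : p.Prime) : ‖a p‖ ^ 2 / p ≤ C ^ 2 :=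
    (hdecay p hp).trans (mul_le_of_le_one_right (sq_nonneg C)
      (rpow_le_one_of_one_le_of_nonpos (by exact_mod_cast hp.one_le) (by linarith)))
  set t : ℕ → ℝ := fun n => if n.Prime then ‖a n‖ ^ 2 / n else 0
  have ht_decay (n : ℕ) : t n ≤ C ^ 2 * (n : ℝ) ^ (2 * θ - 1) := by
    by_cases hn : n.Prime
    · simpa [t, hn] using hdecay n hn
    · simp only [t, hn, if_false]
      positivity
  have hlog (m : ℕ) (hm : 2 ≤ m) : ∑ n ∈ Icc 1 m, t n
      ≤ (C ^ 2 + 2) / 2 * log C₀ + (C ^ 2 + 2) / 2 * (2 * K + 1) * log m := by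
    rw [← sum_filter]
    refine (sum_prime_norm_sq_div_le_log h_one h_mul
      (fun p hp => (hbound p hp).trans (hK p (by exact_mod_cast hp.two_le))) hD hC₀
      (by omega) ?_).trans_eq (by ring)
    simpa only [rpow_zero, one_mul, mul_one, Nat.floor_natCast] using
      hprod m (by exact_mod_cast hm)
  have hsq := summable_sq_of_le_rpow_of_sum_le_log (fun n => by positivity)
    (by linarith : 2 * θ - 1 < 0) ht_decay hlog
  refine (hsq.comp_injective Nat.Primes.coe_nat_injective).congr fun p => ?_
  simp [t, p.2, div_pow, ← pow_mul]
end

section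
/- Let a : ℕ → ℂ be a multiplicative arithmetic function, and suppose there exists C > 0 such that ∏_{p≤x, p prime}(1 + |a(p)|²/p) ≤ C ∑_{n≤x} μ(n)²|a(n)|²/n for all x ≥ 2. Then there exists a constant C′ > 0 such that ∑_{x/2 < p ≤ x, p prime} |a(p)|²/p ≤ C′ for all x ≥ 2. -/
/-!
Put `f n = ‖a n‖² / n`; it is multiplicative, so `μ(n)² f(n) = ∏_{p ∣ n} f(p)`. If `X` is a set of
primes `≤ N` any two of which have product `> N`, a squarefree `n ≤ N` has at most one prime factor
in `X`, hence `∑_{n ≤ N} μ(n)² f(n) ≤ ∏_{p ≤ N, p ∉ X} (1 + f p) · (1 + ∑_{p ∈ X} f p)`, and the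
hypothesis yields `∏_{p ∈ X} (1 + f p) ≤ C (1 + ∑_{p ∈ X} f p)`. Taking `X = {p, q}` bounds `f`
uniformly on the primes. Taking `X` the primes in `(x/2, x]` and expanding the product to second
order gives `S + (S² - ∑_{p ∈ X} f(p)²)/2 ≤ (C - 1)(1 + S)` for `S = ∑_{p ∈ X} f p`, a quadratic
inequality bounding `S` once `f(p)² ≤ B f(p)`.
-/

open Finset ArithmeticFunction

theorem Nat.map_eq_prod_primeFactors_of_squarefree {β : Type*} [CommMonoid β] {f : ℕ → β}
    (hf1 : f 1 = 1) (hf : ∀ m n, m.Coprime n → f (m * n) = f m * f n) {n : ℕ}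
    (hn : Squarefree n) : f n = ∏ p ∈ n.primeFactors, f p := by
  rw [Nat.multiplicative_factorization f hf hf1 hn.ne_zero, Finsupp.prod,
    Nat.support_factorization]
  refine prod_congr rfl fun p hp => ?_
  rw [Nat.factorization_eq_one_of_squarefree hn (Nat.prime_of_mem_primeFactors hp)
    (Nat.dvd_of_mem_primeFactors hp), pow_one]

theorem sum_prod_le_prod_one_add_mul_one_add_sum {ι : Type*} [DecidableEq ι] {t : ι → ℝ}
    (ht : ∀ i, 0 ≤ t i) {A X : Finset ι} {𝒜 : Finset (Finset ι)}
    (h𝒜 : ∀ T ∈ 𝒜, T \ X ⊆ A ∧ #(T ∩ X) ≤ 1) :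
    ∑ T ∈ 𝒜, ∏ i ∈ T, t i ≤ (∏ i ∈ A, (1 + t i)) * (1 + ∑ i ∈ X, t i) := by
  set ℬ : Finset (Finset ι) := insert ∅ (X.map ⟨singleton, singleton_injective⟩)
  have hℬ : ∑ V ∈ ℬ, ∏ i ∈ V, t i = 1 + ∑ i ∈ X, t i := by
    rw [sum_insert (by simp), sum_map]
    simp
  have hsplit : ∀ T ∈ 𝒜, (T \ X, T ∩ X) ∈ A.powerset ×ˢ ℬ := by
    intro T hT
    obtain ⟨hA, hX⟩ := h𝒜 T hT
    refine mem_product.2 ⟨mem_powerset.2 hA, ?_⟩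
    rcases Nat.le_one_iff_eq_zero_or_eq_one.1 hX with h0 | h1
    · simp [card_eq_zero.1 h0, ℬ]
    · obtain ⟨i, hi⟩ := card_eq_one.1 h1
      have hiX : i ∈ X := mem_of_mem_inter_right (hi ▸ mem_singleton_self i)
      simp [ℬ, hi, hiX]
  have hinj : Set.InjOn (fun T => (T \ X, T ∩ X)) 𝒜 := fun T _ T' _ h => by
    rw [← sdiff_union_inter T X, ← sdiff_union_inter T' X]
    simp_all [Prod.ext_iff]
  calc ∑ T ∈ 𝒜, ∏ i ∈ T, t i
      = ∑ T ∈ 𝒜, (∏ i ∈ T \ X, t i) * ∏ i ∈ T ∩ X, t i :=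
        sum_congr rfl fun T _ => by rw [mul_comm, prod_inter_mul_prod_sdiff]
    _ = ∑ UV ∈ 𝒜.image fun T => (T \ X, T ∩ X), (∏ i ∈ UV.1, t i) * ∏ i ∈ UV.2, t i :=
        by rw [sum_image hinj]
    _ ≤ ∑ UV ∈ A.powerset ×ˢ ℬ, (∏ i ∈ UV.1, t i) * ∏ i ∈ UV.2, t i :=
        sum_le_sum_of_subset_of_nonneg (image_subset_iff.2 hsplit) fun UV _ _ =>
          mul_nonneg (prod_nonneg fun i _ => ht i) (prod_nonneg fun i _ => ht i)
    _ = (∏ i ∈ A, (1 + t i)) * (1 + ∑ i ∈ X, t i) := by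
        rw [prod_one_add, ← hℬ, sum_mul_sum, sum_product]

theorem primeFactors_subset_filter_prime_Icc {n N : ℕ} (hnN : n ≤ N) :
    n.primeFactors ⊆ (Icc 1 N).filter Nat.Prime := fun _ hp =>
  mem_filter.2 ⟨mem_Icc.2 ⟨(Nat.prime_of_mem_primeFactors hp).one_le,
    (Nat.le_of_mem_primeFactors hp).trans hnN⟩, Nat.prime_of_mem_primeFactors hp⟩

theorem card_primeFactors_inter_le_one {n N : ℕ} (hn : n ∈ Icc 1 N) {X : Finset ℕ}
    (hX : ∀ p ∈ X, ∀ q ∈ X, p ≠ q → N < p * q) : #(n.primeFactors ∩ X) ≤ 1 := by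
  obtain ⟨hn1, hnN⟩ := mem_Icc.1 hn
  refine card_le_one.2 fun p hp q hq => by_contra fun hpq => ?_
  simp only [mem_inter, Nat.mem_primeFactors] at hp hq
  have hdvd : p * q ∣ n := Nat.Coprime.mul_dvd_of_dvd_of_dvd
    ((Nat.coprime_primes hp.1.1 hq.1.1).2 hpq) hp.1.2.1 hq.1.2.1
  have := Nat.le_of_dvd hn1 hdvd
  have := hX p hp.2 q hq.2 hpq
  omega

theorem sum_moebius_sq_mul_le {f : ℕ → ℝ} (hf0 : ∀ n, 0 ≤ f n) (hf1 : f 1 = 1)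
    (hf : ∀ m n, m.Coprime n → f (m * n) = f m * f n) (N : ℕ) {X : Finset ℕ}
    (hX : ∀ p ∈ X, ∀ q ∈ X, p ≠ q → N < p * q) :
    ∑ n ∈ Icc 1 N, (moebius n : ℝ) ^ 2 * f n ≤
      (∏ p ∈ (Icc 1 N).filter Nat.Prime \ X, (1 + f p)) * (1 + ∑ p ∈ X, f p) := by
  have hinj : Set.InjOn Nat.primeFactors ({n ∈ Icc 1 N | Squarefree n} : Finset ℕ) :=
      fun m hm n hn h => by
    rw [← Nat.prod_primeFactors_of_squarefree (n := m) (mem_filter.1 hm).2,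
      ← Nat.prod_primeFactors_of_squarefree (n := n) (mem_filter.1 hn).2, h]
  calc ∑ n ∈ Icc 1 N, (moebius n : ℝ) ^ 2 * f n
      = ∑ n ∈ {n ∈ Icc 1 N | Squarefree n}, ∏ p ∈ n.primeFactors, f p := by
        rw [sum_filter]
        refine sum_congr rfl fun n _ => ?_
        split_ifs with hn
        · have hμ : (moebius n : ℝ) ^ 2 = 1 := by
            exact_mod_cast moebius_sq_eq_one_of_squarefree hn
          rw [hμ, one_mul, Nat.map_eq_prod_primeFactors_of_squarefree hf1 hf hn]
        · simp [moebius_eq_zero_of_not_squarefree hn]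
    _ = ∑ T ∈ {n ∈ Icc 1 N | Squarefree n}.image Nat.primeFactors, ∏ p ∈ T, f p :=
        by rw [sum_image hinj]
    _ ≤ _ := by
        refine sum_prod_le_prod_one_add_mul_one_add_sum hf0 fun T hT => ?_
        obtain ⟨n, hn, rfl⟩ := mem_image.1 hT
        have hnN := (mem_filter.1 hn).1
        exact ⟨sdiff_subset_sdiff (primeFactors_subset_filter_prime_Icc (mem_Icc.1 hnN).2)
          le_rfl, card_primeFactors_inter_le_one hnN hX⟩

theorem prod_one_add_le_of_forall_lt_mul {f : ℕ → ℝ} (hf0 : ∀ n, 0 ≤ f n) (hf1 : f 1 = 1)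
    (hf : ∀ m n, m.Coprime n → f (m * n) = f m * f n) {C : ℝ} (hC : 0 ≤ C) {N : ℕ}
    (hN : ∏ p ∈ (Icc 1 N).filter Nat.Prime, (1 + f p) ≤
      C * ∑ n ∈ Icc 1 N, (moebius n : ℝ) ^ 2 * f n)
    {X : Finset ℕ} (hXN : X ⊆ (Icc 1 N).filter Nat.Prime)
    (hX : ∀ p ∈ X, ∀ q ∈ X, p ≠ q → N < p * q) :
    ∏ p ∈ X, (1 + f p) ≤ C * (1 + ∑ p ∈ X, f p) := by
  set P := (Icc 1 N).filter Nat.Prime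
  have hrest : 0 < ∏ p ∈ P \ X, (1 + f p) := prod_pos fun p _ => by linarith [hf0 p]
  refine le_of_mul_le_mul_left ?_ hrest
  calc (∏ p ∈ P \ X, (1 + f p)) * ∏ p ∈ X, (1 + f p)
      = ∏ p ∈ P, (1 + f p) := prod_sdiff hXN
    _ ≤ C * ∑ n ∈ Icc 1 N, (moebius n : ℝ) ^ 2 * f n := hN
    _ ≤ C * ((∏ p ∈ P \ X, (1 + f p)) * (1 + ∑ p ∈ X, f p)) :=
        mul_le_mul_of_nonneg_left (sum_moebius_sq_mul_le hf0 hf1 hf N hX) hC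
    _ = (∏ p ∈ P \ X, (1 + f p)) * (C * (1 + ∑ p ∈ X, f p)) := by ring

theorem one_add_mul_one_add_le_of_prime_ne {f : ℕ → ℝ} (hf0 : ∀ n, 0 ≤ f n) (hf1 : f 1 = 1)
    (hf : ∀ m n, m.Coprime n → f (m * n) = f m * f n) {C : ℝ} (hC : 0 ≤ C)
    (h : ∀ N : ℕ, 2 ≤ N → ∏ p ∈ (Icc 1 N).filter Nat.Prime, (1 + f p) ≤
      C * ∑ n ∈ Icc 1 N, (moebius n : ℝ) ^ 2 * f n)
    {p q : ℕ} (hp : p.Prime) (hq : q.Prime) (hpq : p ≠ q) :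
    (1 + f p) * (1 + f q) ≤ C * (1 + f p + f q) := by
  have hsub : {p, q} ⊆ (Icc 1 (max p q)).filter Nat.Prime := by
    simp [insert_subset_iff, hp, hq, hp.one_le, hq.one_le]
  have hlt : max p q < p * q :=
    max_lt (lt_mul_of_one_lt_right hp.pos hq.one_lt) (lt_mul_of_one_lt_left hq.pos hp.one_lt)
  have key := prod_one_add_le_of_forall_lt_mul hf0 hf1 hf hC
    (h _ (hp.two_le.trans (le_max_left p q))) hsub
    (by
      simp only [mem_insert, mem_singleton]
      rintro r (rfl | rfl) s (rfl | rfl) <;> simp_all [mul_comm])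
  rwa [prod_pair hpq, sum_pair hpq, ← add_assoc] at key

theorem bddAbove_image_of_one_add_mul_one_add_le {ι : Type*} {s : Set ι} {t : ι → ℝ} {C : ℝ}
    (h : ∀ i ∈ s, ∀ j ∈ s, i ≠ j → (1 + t i) * (1 + t j) ≤ C * (1 + t i + t j)) :
    BddAbove (t '' s) := by
  by_cases hsmall : ∀ i ∈ s, t i ≤ C - 1
  · exact ⟨C - 1, Set.forall_mem_image.2 hsmall⟩
  push Not at hsmall
  obtain ⟨r, hr, hrC⟩ := hsmall
  refine ⟨max (t r) ((C - 1) * (1 + t r) / (t r + 1 - C)), Set.forall_mem_image.2 fun i hi => ?_⟩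
  rcases eq_or_ne i r with rfl | hir
  · exact le_max_left _ _
  · refine le_max_of_le_right ((le_div_iff₀ (by linarith)).2 ?_)
    linear_combination h i hi r hr hir

theorem one_add_sum_add_le_prod_one_add {ι : Type*} (s : Finset ι) {t : ι → ℝ}
    (ht : ∀ i ∈ s, 0 ≤ t i) :
    1 + ∑ i ∈ s, t i + ((∑ i ∈ s, t i) ^ 2 - ∑ i ∈ s, t i ^ 2) / 2 ≤ ∏ i ∈ s, (1 + t i) := by
  classical
  induction s using Finset.induction_on with
  | empty => simp
  | insert j s hj ih =>
    rw [prod_insert hj, sum_insert hj, sum_insert hj]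
    have htj : 0 ≤ t j := ht j (mem_insert_self j s)
    have hts : ∀ i ∈ s, 0 ≤ t i := fun i hi => ht i (mem_insert_of_mem hi)
    have hsq : ∑ i ∈ s, t i ^ 2 ≤ (∑ i ∈ s, t i) ^ 2 := sum_sq_le_sq_sum_of_nonneg hts
    nlinarith [ih hts, mul_le_mul_of_nonneg_left (ih hts) htj, mul_nonneg htj (sub_nonneg.2 hsq),
      mul_nonneg htj (sum_nonneg hts)]

theorem sum_le_of_prod_one_add_le {ι : Type*} {s : Finset ι} {t : ι → ℝ} {B C : ℝ}
    (ht : ∀ i ∈ s, 0 ≤ t i) (htB : ∀ i ∈ s, t i ≤ B) (hB : 0 ≤ B)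
    (h : ∏ i ∈ s, (1 + t i) ≤ C * (1 + ∑ i ∈ s, t i)) :
    ∑ i ∈ s, t i ≤ 1 + 4 * C + B := by
  have hS : 0 ≤ ∑ i ∈ s, t i := sum_nonneg ht
  have hQS : ∑ i ∈ s, t i ^ 2 ≤ (∑ i ∈ s, t i) ^ 2 := sum_sq_le_sq_sum_of_nonneg ht
  have hQB : ∑ i ∈ s, t i ^ 2 ≤ B * ∑ i ∈ s, t i := by
    rw [mul_sum]
    exact sum_le_sum fun i hi => by nlinarith [ht i hi, htB i hi]
  have key := (one_add_sum_add_le_prod_one_add s ht).trans h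
  have hC : 1 ≤ C := by nlinarith
  nlinarith

theorem floor_lt_mul_of_half_lt {x : ℝ} (hx : 0 ≤ x) {p q : ℕ} (hp : p.Prime)
    (hq : x / 2 < q) : ⌊x⌋₊ < p * q := by
  have hp2 : (2 : ℝ) ≤ p := by exact_mod_cast hp.two_le
  have : (⌊x⌋₊ : ℝ) < p * q := calc
    (⌊x⌋₊ : ℝ) ≤ x := Nat.floor_le hx
    _ = 2 * (x / 2) := by ring
    _ < p * q := by nlinarith
  exact_mod_cast this

/-- **Dyadic block bound.** If `∏_{p≤x}(1 + |a(p)|²/p) ≤ C ∑_{n≤x} μ(n)²|a(n)|²/n`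
for all `x ≥ 2`, then `∑_{x/2 < p ≤ x} |a(p)|²/p` is uniformly bounded. -/
theorem dyadic_block_bounded (a : ℕ → ℂ)
    (hmul : a 1 = 1 ∧ ∀ m n : ℕ, Nat.Coprime m n → a (m * n) = a m * a n)
    (h : ∃ C : ℝ, 0 < C ∧ ∀ x : ℝ, 2 ≤ x →
      ∏ p ∈ (Finset.Icc 1 ⌊x⌋₊).filter Nat.Prime,
        (1 + ‖a p‖ ^ 2 / (p : ℝ))
      ≤ C * ∑ n ∈ Finset.Icc 1 ⌊x⌋₊,
        ((ArithmeticFunction.moebius n : ℝ)) ^ 2 * ‖a n‖ ^ 2 / (n : ℝ)) :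
    ∃ C' : ℝ, 0 < C' ∧ ∀ x : ℝ, 2 ≤ x →
      ∑ p ∈ (Finset.Icc 1 ⌊x⌋₊).filter (fun p => Nat.Prime p ∧ x / 2 < (p : ℝ)),
        ‖a p‖ ^ 2 / (p : ℝ) ≤ C' := by
  obtain ⟨h1, hmul⟩ := hmul
  obtain ⟨C, hC, h⟩ := h
  set f : ℕ → ℝ := fun n => ‖a n‖ ^ 2 / n
  have hf0 : ∀ n, 0 ≤ f n := fun n => by positivity
  have hf1 : f 1 = 1 := by simp [f, h1]
  have hf : ∀ m n, m.Coprime n → f (m * n) = f m * f n := fun m n hmn => by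
    simp only [f, hmul m n hmn, norm_mul, Nat.cast_mul]
    ring
  have hx : ∀ x : ℝ, 2 ≤ x → ∏ p ∈ (Icc 1 ⌊x⌋₊).filter Nat.Prime, (1 + f p) ≤
      C * ∑ n ∈ Icc 1 ⌊x⌋₊, (moebius n : ℝ) ^ 2 * f n := by
    simpa only [f, mul_div_assoc] using h
  have hN : ∀ N : ℕ, 2 ≤ N → ∏ p ∈ (Icc 1 N).filter Nat.Prime, (1 + f p) ≤
      C * ∑ n ∈ Icc 1 N, (moebius n : ℝ) ^ 2 * f n := fun N hN => by
    simpa only [Nat.floor_natCast] using hx N (by exact_mod_cast hN)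
  obtain ⟨B, hB⟩ := bddAbove_image_of_one_add_mul_one_add_le (s := {p : ℕ | p.Prime}) (t := f)
    fun p hp q hq hpq => one_add_mul_one_add_le_of_prime_ne hf0 hf1 hf hC.le hN hp hq hpq
  have hB0 : 0 ≤ B := (hf0 2).trans (hB ⟨2, Nat.prime_two, rfl⟩)
  refine ⟨1 + 4 * C + B, by positivity, fun x hx2 => ?_⟩
  refine sum_le_of_prod_one_add_le (fun p _ => hf0 p)
    (fun p hp => hB ⟨p, (mem_filter.1 hp).2.1, rfl⟩) hB0 ?_
  refine prod_one_add_le_of_forall_lt_mul hf0 hf1 hf hC.le (hx x hx2)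
    (fun p hp => mem_filter.2 ⟨(mem_filter.1 hp).1, (mem_filter.1 hp).2.1⟩)
    fun p hp q hq _ =>
      floor_lt_mul_of_half_lt (by linarith) (mem_filter.1 hp).2.1 (mem_filter.1 hq).2.2
end

section
/- Let a : ℕ → ℂ be a multiplicative arithmetic function, and suppose there exists C > 0 such that ∏_{p≤x, p prime}(1 + |a(p)|²/p) ≤ C ∑_{n≤x} μ(n)²|a(n)|²/n for all x ≥ 2. Then there exists a constant C′ > 0 such that λ_a(x) = ∑_{p≤x, p prime} |a(p)|²/p ≤ C′ log x for all x ≥ 2. -/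
/-!
Put `f n = |a n|² / n` and `G N = ∏_{p ≤ N} (1 + f p)`. Expanding `G N` as a sum over the
divisors of the primorial shows `∑_{n ≤ N} μ(n)² f n ≤ G N`, so Rankin's trick `1/n ≤ N/n²`
turns the hypothesis into `G N ≤ C N ∏_{p ≤ N} (1 + f p / p)`. Taking logarithms,
`∑_{p ≤ N} log ((1 + f p) / (1 + f p / p)) ≤ log (C N)`, and each term is at least a constant
multiple of `f p` as long as `f p` stays bounded. It does once `G (p - 1) ≥ 2C`: the hypothesis
at `p` reads `(1 + f p) G (p - 1) ≤ C (S + f p)` with `S ≤ G (p - 1)` the squarefree sum up to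
`p - 1`, which forces `f p ≤ 2C`. If `G` never reaches `2C`, then `∑_{p ≤ N} f p < G N` is
bounded outright.
-/

open Finset Real
open scoped ArithmeticFunction.Moebius

theorem Finset.one_add_sum_le_prod_one_add {ι R : Type*} [CommSemiring R] [PartialOrder R]
    [IsOrderedRing R] (s : Finset ι) {f : ι → R} (hf : ∀ i ∈ s, 0 ≤ f i) :
    1 + ∑ i ∈ s, f i ≤ ∏ i ∈ s, (1 + f i) := by
  classical
  induction s using Finset.induction_on with
  | empty => simp
  | insert j s hj ih =>
    rw [sum_insert hj, prod_insert hj]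
    have hj0 := hf j (mem_insert_self j s)
    have ih := ih fun i hi => hf i (mem_insert_of_mem hi)
    have hs0 : 0 ≤ ∑ i ∈ s, f i := sum_nonneg fun i hi => hf i (mem_insert_of_mem hi)
    calc 1 + (f j + ∑ i ∈ s, f i) ≤ 1 + (f j + ∑ i ∈ s, f i) + f j * ∑ i ∈ s, f i :=
          le_add_of_nonneg_right (mul_nonneg hj0 hs0)
      _ = (1 + f j) * (1 + ∑ i ∈ s, f i) := by ring
      _ ≤ (1 + f j) * ∏ i ∈ s, (1 + f i) := by gcongr; exact add_nonneg zero_le_one hj0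

theorem div_le_log_div_one_add {x y M : ℝ} (hy : 0 ≤ y) (hyx : 2 * y ≤ x) (hxM : x ≤ M) :
    x / (2 * (1 + M)) ≤ log ((1 + x) / (1 + y)) := by
  have hx : 0 ≤ x := by linarith
  calc x / (2 * (1 + M)) ≤ x / (2 * (1 + x)) := by gcongr
    _ ≤ 1 - ((1 + x) / (1 + y))⁻¹ := by
        rw [inv_div, one_sub_div (by positivity), div_le_div_iff₀ (by positivity) (by positivity)]
        nlinarith
    _ ≤ log ((1 + x) / (1 + y)) := one_sub_inv_le_log_of_pos (by positivity)

theorem two_mul_div_le_self {x y : ℝ} (hx : 0 ≤ x) (hy : 2 ≤ y) : 2 * (x / y) ≤ x := by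
  rw [mul_div_assoc', div_le_iff₀ (by linarith)]
  nlinarith

theorem sum_le_mul_log_of_prod_one_add_le {ι : Type*} {s t : Finset ι} (hst : s ⊆ t)
    {x y : ι → ℝ} {M B : ℝ} (hM : 0 ≤ M) (hy : ∀ i ∈ t, 0 ≤ y i ∧ 2 * y i ≤ x i)
    (hxM : ∀ i ∈ s, x i ≤ M) (h : ∏ i ∈ t, (1 + x i) ≤ B * ∏ i ∈ t, (1 + y i)) :
    ∑ i ∈ s, x i ≤ 2 * (1 + M) * log B := by
  have hy1 : ∀ i ∈ t, 0 < 1 + y i := fun i hi => by linarith [(hy i hi).1]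
  have hratio : ∀ i ∈ t, 1 ≤ (1 + x i) / (1 + y i) := fun i hi => by
    rw [one_le_div (hy1 i hi)]; linarith [hy i hi]
  have hprod : ∏ i ∈ t, (1 + x i) / (1 + y i) ≤ B := by
    rw [prod_div_distrib, div_le_iff₀ (prod_pos hy1)]
    exact h
  have hlog : ∑ i ∈ t, log ((1 + x i) / (1 + y i)) ≤ log B := by
    rw [← log_prod fun i hi => (zero_lt_one.trans_le (hratio i hi)).ne']
    exact log_le_log (prod_pos fun i hi => zero_lt_one.trans_le (hratio i hi)) hprod
  rw [mul_comm, ← div_le_iff₀ (by positivity), sum_div]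
  calc ∑ i ∈ s, x i / (2 * (1 + M))
      ≤ ∑ i ∈ s, log ((1 + x i) / (1 + y i)) :=
        sum_le_sum fun i hi =>
          div_le_log_div_one_add (hy i (hst hi)).1 (hy i (hst hi)).2 (hxM i hi)
    _ ≤ ∑ i ∈ t, log ((1 + x i) / (1 + y i)) :=
        sum_le_sum_of_subset_of_nonneg hst fun i hi _ => log_nonneg (hratio i hi)
    _ ≤ log B := hlog

theorem exists_pos_le_mul_log {u : ℕ → ℝ} {A B : ℝ} (h : ∀ N, 2 ≤ N → u N ≤ A + B * log N) :
    ∃ C > 0, ∀ N, 2 ≤ N → u N ≤ C * log N := by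
  have hlog2 : 0 < log 2 := log_pos one_lt_two
  refine ⟨|A| / log 2 + |B| + 1, by positivity, fun N hN => ?_⟩
  have hlogN : log 2 ≤ log N := log_le_log two_pos (by exact_mod_cast hN)
  have hA : A ≤ |A| / log 2 * log N := by
    rw [div_mul_eq_mul_div, le_div_iff₀ hlog2]
    nlinarith [le_abs_self A, abs_nonneg A]
  nlinarith [h N hN, le_abs_self B, abs_nonneg B, hlog2]

namespace ArithmeticFunction.IsMultiplicative

variable {R : Type*} [CommRing R] [PartialOrder R] [IsOrderedRing R]
  {f : ArithmeticFunction R}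

theorem sum_moebius_sq_mul_le_prod_primesLE (hf : f.IsMultiplicative) (hf0 : ∀ n, 0 ≤ f n)
    (N : ℕ) : ∑ n ∈ Icc 1 N, (μ n : R) ^ 2 * f n ≤ ∏ p ∈ Nat.primesLE N, (1 + f p) := by
  have hdvd : {n ∈ Icc 1 N | Squarefree n} ⊆ (primorial N).divisors := by
    intro n hn
    simp only [mem_filter, mem_Icc] at hn
    exact Nat.mem_divisors.2 ⟨hn.2.dvd_primorial.trans (primorial_dvd_primorial hn.1.2),
      primorial_ne_zero N⟩
  calc ∑ n ∈ Icc 1 N, (μ n : R) ^ 2 * f n = ∑ n ∈ Icc 1 N with Squarefree n, f n := by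
        rw [sum_filter]
        refine sum_congr rfl fun n _ => ?_
        rw [← Int.cast_pow, moebius_sq]
        split_ifs <;> simp
    _ ≤ ∑ d ∈ (primorial N).divisors, f d :=
        sum_le_sum_of_subset_of_nonneg hdvd fun d _ _ => hf0 d
    _ = ∏ p ∈ Nat.primesLE N, (1 + f p) := by
        rw [← hf.prodPrimeFactors_one_add_of_squarefree (squarefree_primorial N),
          primeFactors_primorial]

variable {f : ArithmeticFunction ℝ}

theorem prod_primesLE_le_mul_prod_div (hf : f.IsMultiplicative) (hf0 : ∀ n, 0 ≤ f n) {C : ℝ}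
    (hC : 0 ≤ C) {N : ℕ}
    (h : ∏ p ∈ Nat.primesLE N, (1 + f p) ≤ C * ∑ n ∈ Icc 1 N, (μ n : ℝ) ^ 2 * f n) :
    ∏ p ∈ Nat.primesLE N, (1 + f p) ≤ C * N * ∏ p ∈ Nat.primesLE N, (1 + f p / p) := by
  set g := f.pdiv (ArithmeticFunction.id : ArithmeticFunction ℝ)
  have hg_apply : ∀ n, g n = f n / n := fun n => by simp [g]
  have hgm : g.IsMultiplicative := hf.pdiv isMultiplicative_id.natCast
  have hg0 : ∀ n, 0 ≤ g n := fun n => by rw [hg_apply]; exact div_nonneg (hf0 n) n.cast_nonneg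
  have hrankin :
      ∑ n ∈ Icc 1 N, (μ n : ℝ) ^ 2 * f n ≤ N * ∑ n ∈ Icc 1 N, (μ n : ℝ) ^ 2 * g n := by
    rw [mul_sum]
    refine sum_le_sum fun n hn => ?_
    obtain ⟨hn1, hnN⟩ := mem_Icc.1 hn
    have hn0 : (0 : ℝ) < n := by exact_mod_cast hn1
    rw [hg_apply, mul_div_assoc', mul_div_assoc', le_div_iff₀ hn0, mul_comm (N : ℝ)]
    have := hf0 n
    gcongr
  calc ∏ p ∈ Nat.primesLE N, (1 + f p)
      ≤ C * (N * ∑ n ∈ Icc 1 N, (μ n : ℝ) ^ 2 * g n) := h.trans (by gcongr)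
    _ ≤ C * (N * ∏ p ∈ Nat.primesLE N, (1 + g p)) := by
        gcongr; exact hgm.sum_moebius_sq_mul_le_prod_primesLE hg0 N
    _ = C * N * ∏ p ∈ Nat.primesLE N, (1 + f p / p) := by simp only [hg_apply, mul_assoc]

theorem apply_prime_le_two_mul_of_two_mul_le_prod (hf : f.IsMultiplicative)
    (hf0 : ∀ n, 0 ≤ f n) {C : ℝ} (hC : 0 < C)
    (h : ∀ N, 2 ≤ N → ∏ p ∈ Nat.primesLE N, (1 + f p) ≤ C * ∑ n ∈ Icc 1 N, (μ n : ℝ) ^ 2 * f n)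
    {p : ℕ} (hp : p.Prime) (hG : 2 * C ≤ ∏ q ∈ Nat.primesLE (p - 1), (1 + f q)) :
    f p ≤ 2 * C := by
  obtain ⟨q, rfl⟩ := Nat.exists_eq_add_one_of_ne_zero hp.ne_zero
  rw [Nat.add_sub_cancel] at hG
  have hstep := h (q + 1) hp.two_le
  rw [Nat.primesLE_succ, if_pos hp, prod_insert (Nat.notMem_primesLE q),
    sum_Icc_succ_top (by omega), moebius_apply_prime hp] at hstep
  have hS := hf.sum_moebius_sq_mul_le_prod_primesLE hf0 q
  have hfp := hf0 (q + 1)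
  push_cast at hstep
  -- `f p (G - C) ≤ (C - 1) G` with `G - C ≥ G / 2`, where `G` is the product up to `p - 1`.
  nlinarith

theorem exists_sum_primesLE_le_mul_log (hf : f.IsMultiplicative) (hf0 : ∀ n, 0 ≤ f n) {C : ℝ}
    (hC : 0 < C)
    (h : ∀ N, 2 ≤ N → ∏ p ∈ Nat.primesLE N, (1 + f p) ≤ C * ∑ n ∈ Icc 1 N, (μ n : ℝ) ^ 2 * f n) :
    ∃ C' > 0, ∀ N, 2 ≤ N → ∑ p ∈ Nat.primesLE N, f p ≤ C' * Real.log N := by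
  have hmono : Monotone fun N => ∏ p ∈ Nat.primesLE N, (1 + f p) := fun M N hMN =>
    prod_le_prod_of_subset_of_one_le (Nat.primesLE_mono hMN) (fun p _ => by linarith [hf0 p])
      fun p _ _ => by linarith [hf0 p]
  by_cases hbdd : ∀ N, ∏ p ∈ Nat.primesLE N, (1 + f p) < 2 * C
  · refine exists_pos_le_mul_log (A := 2 * C) (B := 0) fun N _ => ?_
    have := (Nat.primesLE N).one_add_sum_le_prod_one_add fun p _ => hf0 p
    linarith [hbdd N]
  push Not at hbdd
  obtain ⟨N₀, hN₀⟩ := hbdd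
  have hlarge : ∀ p, p.Prime → N₀ < p → f p ≤ 2 * C := fun p hp hp₀ =>
    hf.apply_prime_le_two_mul_of_two_mul_le_prod hf0 hC h hp (hN₀.trans (hmono (by omega)))
  refine exists_pos_le_mul_log (A := ∑ p ∈ Nat.primesLE N₀, f p + 2 * (1 + 2 * C) * Real.log C)
    (B := 2 * (1 + 2 * C)) fun N hN => ?_
  rw [← sum_filter_add_sum_filter_not (Nat.primesLE N) (· ≤ N₀)]
  have hsmall : ∑ p ∈ Nat.primesLE N with p ≤ N₀, f p ≤ ∑ p ∈ Nat.primesLE N₀, f p :=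
    sum_le_sum_of_subset_of_nonneg (fun p hp => by simp_all [Nat.mem_primesLE])
      fun p _ _ => hf0 p
  have hbig : ∑ p ∈ Nat.primesLE N with ¬p ≤ N₀, f p ≤ 2 * (1 + 2 * C) * Real.log (C * N) :=
    sum_le_mul_log_of_prod_one_add_le (filter_subset _ _) (by positivity)
      (fun p hp => ⟨div_nonneg (hf0 p) p.cast_nonneg, two_mul_div_le_self (hf0 p)
        (by exact_mod_cast Nat.two_le_of_mem_primesLE hp)⟩)
      (fun p hp => hlarge p (Nat.prime_of_mem_primesLE (mem_filter.1 hp).1)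
        (not_le.1 (mem_filter.1 hp).2))
      (hf.prod_primesLE_le_mul_prod_div hf0 hC.le (h N hN))
  rw [log_mul hC.ne' (by positivity)] at hbig
  linarith

end ArithmeticFunction.IsMultiplicative

/-- **Logarithmic growth of `λ_a`.** If `∏_{p≤x}(1 + |a(p)|²/p) ≤ C ∑_{n≤x} μ(n)²|a(n)|²/n`
for all `x ≥ 2`, then `λ_a(x) = ∑_{p≤x} |a(p)|²/p ≪ log x`. -/
theorem lambda_log_growth (a : ℕ → ℂ)
    (hmul : a 1 = 1 ∧ ∀ m n : ℕ, Nat.Coprime m n → a (m * n) = a m * a n)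
    (h : ∃ C : ℝ, 0 < C ∧ ∀ x : ℝ, 2 ≤ x →
      ∏ p ∈ (Finset.Icc 1 ⌊x⌋₊).filter Nat.Prime,
        (1 + ‖a p‖ ^ 2 / (p : ℝ))
      ≤ C * ∑ n ∈ Finset.Icc 1 ⌊x⌋₊,
        ((ArithmeticFunction.moebius n : ℝ)) ^ 2 * ‖a n‖ ^ 2 / (n : ℝ)) :
    ∃ C' : ℝ, 0 < C' ∧ ∀ x : ℝ, 2 ≤ x →
      ∑ p ∈ (Finset.Icc 1 ⌊x⌋₊).filter Nat.Prime,
        ‖a p‖ ^ 2 / (p : ℝ) ≤ C' * Real.log x := by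
  obtain ⟨ha1, ha⟩ := hmul
  obtain ⟨C, hC, h⟩ := h
  let f : ArithmeticFunction ℝ := ⟨fun n => ‖a n‖ ^ 2 / n, by simp⟩
  have hf_apply : ∀ n, f n = ‖a n‖ ^ 2 / n := fun n => rfl
  have hf : f.IsMultiplicative :=
    ⟨by simp [hf_apply, ha1], fun {m n} hmn => by
      simp only [hf_apply, ha m n hmn, norm_mul, mul_pow, Nat.cast_mul]; ring⟩
  obtain ⟨C', hC', hbound⟩ :=
    hf.exists_sum_primesLE_le_mul_log (fun n => by rw [hf_apply]; positivity) hC fun N hN => by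
      simpa [hf_apply, ← Nat.primesLE_eq_filter_Icc_one, mul_div_assoc] using
        h N (by exact_mod_cast hN)
  refine ⟨C', hC', fun x hx => ?_⟩
  have hN : 2 ≤ ⌊x⌋₊ := Nat.le_floor (by exact_mod_cast hx)
  calc ∑ p ∈ (Icc 1 ⌊x⌋₊).filter Nat.Prime, ‖a p‖ ^ 2 / (p : ℝ)
      = ∑ p ∈ Nat.primesLE ⌊x⌋₊, f p := by rw [Nat.primesLE_eq_filter_Icc_one]; rfl
    _ ≤ C' * Real.log ⌊x⌋₊ := hbound _ hN
    _ ≤ C' * Real.log x := by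
        gcongr
        exact Nat.floor_le (by linarith)
end

section
/- Let a : ℕ → ℂ be an arithmetic function and suppose there are constants c > 0 and K such that |∑_{p≤x, p prime} |a(p)|²/p − c log log x| ≤ K for all x ≥ 3. Then there exists a constant C > 0 such that ∑_{p≤x, p prime} |a(p)|/√p ≤ C √(x log log x / log x) for all x ≥ 16. -/
/-!
By Cauchy–Schwarz, `(∑_{p≤x} |a(p)|/√p)² ≤ π(x) · ∑_{p≤x} |a(p)|²/p`. The hypothesis bounds the
second factor by `(c + |K|) log log x` once `log log x ≥ 1` (that is, `x ≥ 16 > e^e`), and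
Chebyshev's bound gives `π(x) ≪ x / log x`.
-/

open Finset Real

lemma Nat.filter_prime_Icc_one_eq_primesLE (n : ℕ) : (Icc 1 n).filter Nat.Prime = n.primesLE := by
  ext p
  simp only [mem_filter, mem_Icc, Nat.mem_primesLE]
  exact ⟨fun ⟨⟨_, hpn⟩, hp⟩ => ⟨hpn, hp⟩, fun ⟨hpn, hp⟩ => ⟨⟨hp.one_le, hpn⟩, hp⟩⟩

lemma Real.log_le_two_mul_sqrt {x : ℝ} (hx : 0 ≤ x) : log x ≤ 2 * √x := by
  rw [← sq_sqrt hx, log_pow, sqrt_sq (sqrt_nonneg x)]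
  push_cast
  gcongr
  exact log_le_self (sqrt_nonneg x)

lemma Chebyshev.primeCounting_floor_le_mul_div_log {x : ℝ} (hx : 1 < x) :
    (Nat.primeCounting ⌊x⌋₊ : ℝ) ≤ (2 * log 4 + 2) * x / log x := by
  have hlog : 0 < log x := log_pos hx
  have hsqrt : √x ≤ 2 * x / log x := by
    rw [le_div_iff₀ hlog]
    nlinarith [log_le_two_mul_sqrt (x := x) (by linarith), sqrt_nonneg x,
      sq_sqrt (by linarith : (0 : ℝ) ≤ x)]
  calc (Nat.primeCounting ⌊x⌋₊ : ℝ) ≤ log 4 * x / log √x + √x := pi_le_log4_mul_div hx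
    _ ≤ log 4 * x / (log x / 2) + 2 * x / log x := by rw [log_sqrt (by linarith)]; gcongr
    _ = (2 * log 4 + 2) * x / log x := by field_simp

lemma Finset.sq_sum_div_sqrt_le_card_mul_sum_sq_div {ι : Type*} (s : Finset ι) (u w : ι → ℝ)
    (hw : ∀ i ∈ s, 0 ≤ w i) :
    (∑ i ∈ s, u i / √(w i)) ^ 2 ≤ #s * ∑ i ∈ s, u i ^ 2 / w i := by
  refine (sq_sum_le_card_mul_sum_sq).trans_eq ?_
  congr 1
  exact sum_congr rfl fun i hi => by rw [div_pow, sq_sqrt (hw i hi)]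

lemma Real.one_le_log_log {x : ℝ} (hx : 16 ≤ x) : 1 ≤ log (log x) := by
  have h16 : log 16 = 4 * log 2 := by
    rw [show (16 : ℝ) = 2 ^ 4 by norm_num, log_pow]; norm_num
  have he : exp 1 ≤ log x :=
    calc exp 1 ≤ 4 * log 2 := by linarith [exp_one_lt_d9, log_two_gt_d9]
      _ = log 16 := h16.symm
      _ ≤ log x := log_le_log (by norm_num) hx
  simpa using log_le_log (exp_pos 1) he

/-- **Cauchy–Schwarz bound for `∑_{p≤x} |a(p)|/√p`.**
If `∑_{p≤x} |a(p)|²/p = c log log x + O(1)`, then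
`∑_{p≤x} |a(p)|/√p ≪ √(x log log x / log x)`. -/
theorem sum_over_sqrt_bound (a : ℕ → ℂ) (c : ℝ) (hc : 0 < c) (K : ℝ)
    (h : ∀ x : ℝ, 3 ≤ x →
      |(∑ p ∈ (Finset.Icc 1 ⌊x⌋₊).filter Nat.Prime,
        ‖a p‖ ^ 2 / (p : ℝ)) - c * Real.log (Real.log x)| ≤ K) :
    ∃ C : ℝ, 0 < C ∧ ∀ x : ℝ, 16 ≤ x →
      ∑ p ∈ (Finset.Icc 1 ⌊x⌋₊).filter Nat.Prime,
        ‖a p‖ / Real.sqrt (p : ℝ)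
      ≤ C * Real.sqrt (x * Real.log (Real.log x) / Real.log x) := by
  refine ⟨√((2 * log 4 + 2) * (c + |K|)), by positivity, fun x hx => ?_⟩
  set S := (Icc 1 ⌊x⌋₊).filter Nat.Prime with hS
  have hlog : 0 < log x := log_pos (by linarith)
  have hloglog : 1 ≤ log (log x) := one_le_log_log hx
  have hcard : (#S : ℝ) ≤ (2 * log 4 + 2) * x / log x := by
    rw [hS, Nat.filter_prime_Icc_one_eq_primesLE, Nat.primesLE_card_eq_primeCounting]
    exact Chebyshev.primeCounting_floor_le_mul_div_log (by linarith)
  have hsum : ∑ p ∈ S, ‖a p‖ ^ 2 / (p : ℝ) ≤ (c + |K|) * log (log x) := by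
    have := (abs_le.mp (h x (by linarith))).2
    nlinarith [le_abs_self K, abs_nonneg K]
  have hY : 0 ≤ x * log (log x) / log x :=
    div_nonneg (mul_nonneg (by linarith) (by linarith)) hlog.le
  rw [← sqrt_mul (by positivity), le_sqrt (by positivity) (by positivity)]
  calc _ ≤ #S * ∑ p ∈ S, ‖a p‖ ^ 2 / (p : ℝ) :=
        sq_sum_div_sqrt_le_card_mul_sum_sq_div _ _ _ fun p _ => p.cast_nonneg
    _ ≤ ((2 * log 4 + 2) * x / log x) * ((c + |K|) * log (log x)) := by gcongr
    _ = _ := by ring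
end

section
/- Let a : ℕ → ℂ be an arithmetic function and suppose there are constants c > 0 and K such that |∑_{p≤x, p prime} |a(p)|²/p − c log log x| ≤ K for all x ≥ 3. Then 2^{−r} · log ∏_{p ≤ c·2^r, p prime} (1 + 2^r |a(p)|²/p) → 0 as r → ∞; that is, for every ε > 0 there exists R such that for all real r ≥ R, ∏_{p ≤ c·2^r, p prime} (1 + 2^r |a(p)|²/p) ≤ exp(ε · 2^r). -/
/-!
With `t = 2 ^ r` and `x = c t`, the bound `1 + u ≤ exp (2 √u)` turns the product into
`exp (2 √t ∑_{p ≤ x} √(|a p|² / p))`, and Cauchy–Schwarz bounds the sum by `√(π(x) S(x))`, where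
`S(x) = ∑_{p ≤ x} |a p|² / p`. The hypothesis gives `S(x) = O(log log x)` and Chebyshev gives
`π(x) = O(x / log x)`, so `π(x) S(x) = o(x)` and the exponent is `o(t)`.
-/
open Real Finset Filter Asymptotics
open scoped Nat.Prime

lemma one_add_le_exp_two_mul_sqrt {u : ℝ} (hu : 0 ≤ u) : 1 + u ≤ exp (2 * √u) :=
  calc 1 + u ≤ (1 + √u) ^ 2 := by nlinarith [sq_sqrt hu, sqrt_nonneg u]
    _ ≤ exp √u ^ 2 := by gcongr; linarith [add_one_le_exp √u]
    _ = exp (2 * √u) := by rw [← exp_nat_mul]; norm_num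

lemma prod_one_add_mul_le_exp_sqrt {ι : Type*} (s : Finset ι) {f : ι → ℝ} (hf : ∀ i, 0 ≤ f i)
    {t : ℝ} (ht : 0 ≤ t) :
    ∏ i ∈ s, (1 + t * f i) ≤ exp (2 * √(t * (#s * ∑ i ∈ s, f i))) := by
  have cauchy_schwarz : ∑ i ∈ s, √(f i) ≤ √(#s) * √(∑ i ∈ s, f i) := by
    simpa using sum_sqrt_mul_sqrt_le s (fun _ ↦ zero_le_one) hf
  calc ∏ i ∈ s, (1 + t * f i)
      ≤ ∏ i ∈ s, exp (2 * √(t * f i)) :=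
        prod_le_prod (fun i _ ↦ by positivity [hf i])
          fun i _ ↦ one_add_le_exp_two_mul_sqrt (mul_nonneg ht (hf i))
    _ = exp (2 * (√t * ∑ i ∈ s, √(f i))) := by
        simp only [← exp_sum, ← mul_sum, sqrt_mul ht]
    _ ≤ exp (2 * √(t * (#s * ∑ i ∈ s, f i))) := by
        rw [sqrt_mul ht, sqrt_mul (Nat.cast_nonneg _)]
        gcongr

lemma isBigO_of_abs_sub_const_mul_le {α : Type*} {l : Filter α} {f g : α → ℝ}
    (hg : Tendsto g l atTop) {c K : ℝ} (h : ∀ᶠ x in l, |f x - c * g x| ≤ K) :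
    f =O[l] g := by
  have hbdd : (fun x ↦ f x - c * g x) =O[l] g :=
    (IsBigO.of_bound (g := fun _ ↦ (1 : ℝ)) K (by simpa using h)).trans
      ((isLittleO_one_left_iff ℝ).mpr (tendsto_norm_atTop_atTop.comp hg)).isBigO
  simpa using hbdd.add ((isBigO_refl g l).const_mul_left c)

lemma isBigO_primeCounting_floor_div_log :
    (fun x : ℝ ↦ (π ⌊x⌋₊ : ℝ)) =O[atTop] fun x ↦ x / log x := by
  refine IsBigO.of_bound (log 4 + 1) ?_
  filter_upwards [Chebyshev.eventually_primeCounting_le one_pos, eventually_ge_atTop 1]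
    with x hπ hx
  have : 0 ≤ log x := log_nonneg hx
  rw [Real.norm_of_nonneg (by positivity), Real.norm_of_nonneg (by positivity)]
  simpa [mul_div_assoc] using hπ

lemma primeCounting_floor_mul_isLittleO_id {f : ℝ → ℝ} (hf : f =O[atTop] fun x ↦ log (log x)) :
    (fun x ↦ π ⌊x⌋₊ * f x) =o[atTop] id := by
  have hloglog : (fun x ↦ log (log x)) =o[atTop] log :=
    isLittleO_log_id_atTop.comp_tendsto tendsto_log_atTop
  refine (isBigO_primeCounting_floor_div_log.mul_isLittleO (hf.trans_isLittleO hloglog)).congr'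
    .rfl ?_
  filter_upwards [eventually_gt_atTop 1] with x hx
  field_simp [(log_pos hx).ne']
  rfl

/-- **Small primes product estimate.** If `∑_{p≤x} |a(p)|²/p = c log log x + O(1)`,
then `2^{-r} log ∏_{p ≤ c 2^r}(1 + 2^r |a(p)|²/p) → 0` as `r → ∞`. -/
theorem small_primes_product (a : ℕ → ℂ) (c : ℝ) (hc : 0 < c) (K : ℝ)
    (h : ∀ x : ℝ, 3 ≤ x →
      |(∑ p ∈ (Finset.Icc 1 ⌊x⌋₊).filter Nat.Prime,
        ‖a p‖ ^ 2 / (p : ℝ)) - c * Real.log (Real.log x)| ≤ K) :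
    ∀ ε : ℝ, 0 < ε → ∃ R : ℝ, ∀ r : ℝ, R ≤ r →
      ∏ p ∈ (Finset.Icc 1 ⌊c * (2 : ℝ) ^ r⌋₊).filter Nat.Prime,
        (1 + (2 : ℝ) ^ r * ‖a p‖ ^ 2 / (p : ℝ))
      ≤ Real.exp (ε * (2 : ℝ) ^ r) := by
  intro ε hε
  simp only [← Nat.primesLE_eq_filter_Icc_one, mul_div_assoc] at h ⊢
  set S : ℝ → ℝ := fun x ↦ ∑ p ∈ Nat.primesLE ⌊x⌋₊, ‖a p‖ ^ 2 / (p : ℝ)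
  have hS : S =O[atTop] fun x ↦ log (log x) :=
    isBigO_of_abs_sub_const_mul_le (tendsto_log_atTop.comp tendsto_log_atTop)
      ((eventually_ge_atTop 3).mono h)
  have hsmall :=
    (primeCounting_floor_mul_isLittleO_id hS).bound (c := ε ^ 2 / (4 * c)) (by positivity)
  have hx : Tendsto (fun r : ℝ ↦ c * 2 ^ r) atTop atTop :=
    (tendsto_rpow_atTop_of_base_gt_one 2 one_lt_two).const_mul_atTop hc
  obtain ⟨R, hR⟩ := eventually_atTop.mp (hx.eventually hsmall)
  refine ⟨R, fun r hr ↦ ?_⟩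
  have ht : 0 < (2 : ℝ) ^ r := by positivity
  have hπS : #(Nat.primesLE ⌊c * 2 ^ r⌋₊) * S (c * 2 ^ r) ≤ ε ^ 2 / (4 * c) * (c * 2 ^ r) := by
    have hS0 : 0 ≤ S (c * 2 ^ r) := sum_nonneg fun p _ ↦ by positivity
    simpa [Nat.primesLE_card_eq_primeCounting, abs_of_nonneg hS0, abs_of_pos hc, abs_of_pos ht]
      using hR r hr
  calc _ ≤ exp (2 * √(2 ^ r * (#(Nat.primesLE ⌊c * 2 ^ r⌋₊) * S (c * 2 ^ r)))) :=
        prod_one_add_mul_le_exp_sqrt _ (fun p ↦ by positivity) ht.le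
    _ ≤ exp (2 * √(2 ^ r * (ε ^ 2 / (4 * c) * (c * 2 ^ r)))) := by gcongr
    _ = exp (ε * 2 ^ r) := by
        rw [show 2 ^ r * (ε ^ 2 / (4 * c) * (c * 2 ^ r)) = (ε * 2 ^ r / 2) ^ 2 by field_simp; ring,
          sqrt_sq (by positivity)]
        ring_nf
end
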